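/- Let π and σ be permutations with disjoint domains and lengths m and n. Then Σ_{τ ∈ π ⧢ σ} q^{maj(τ)} = q^{maj(π)+maj(σ)} · [m+n choose m]_q. -/

import Mathlib

/-- The descent set of a word: positions `i` (1-based) with `τ_i > τ_{i+1}`. -/
def Des (τ : List ℕ) : Finset ℕ :=
  (Finset.Ico 1 τ.length).filter (fun i => τ.getD i 0 < τ.getD (i-1) 0)

/-- The major index. -/
def maj (τ : List ℕ) : ℕ := ∑ i ∈ Des τ, i

/-- The descent number. -/
def des (τ : List ℕ) : ℕ := (Des τ).card

/-- The ascent set. -/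
def Asc (τ : List ℕ) : Finset ℕ :=
  (Finset.Ico 1 τ.length).filter (fun i => τ.getD (i-1) 0 < τ.getD i 0)

/-- The peak set: positions `i` (1-based, `2 ≤ i ≤ |τ|-1`) with `τ_{i-1} < τ_i > τ_{i+1}`. -/
def Pk (τ : List ℕ) : Finset ℕ :=
  (Finset.Ico 2 τ.length).filter
    (fun i => τ.getD (i-2) 0 < τ.getD (i-1) 0 ∧ τ.getD i 0 < τ.getD (i-1) 0)

/-- The valley set. -/
def Val (τ : List ℕ) : Finset ℕ :=
  (Finset.Ico 2 τ.length).filter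
    (fun i => τ.getD (i-1) 0 < τ.getD (i-2) 0 ∧ τ.getD (i-1) 0 < τ.getD i 0)

/-- The left peak set: peaks of `0τ`, recorded as positions of `τ`. -/
def Lpk (τ : List ℕ) : Finset ℕ := (Pk (0 :: τ)).image (· - 1)

/-- The right peak set: peaks of `τ0`. -/
def Rpk (τ : List ℕ) : Finset ℕ := Pk (τ ++ [0])

/-- The exterior peak set: peaks of `0τ0`, recorded as positions of `τ`. -/
def Epk (τ : List ℕ) : Finset ℕ := (Pk (0 :: (τ ++ [0]))).image (· - 1)

def pk (τ : List ℕ) : ℕ := (Pk τ).card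
def lpk (τ : List ℕ) : ℕ := (Lpk τ).card

/-- The number of updown runs (maximal monotone factors of `0τ`): for a nonempty
word with distinct letters this is one more than the number of interior
direction changes (peaks and valleys) of `0τ`. -/
def udr (τ : List ℕ) : ℕ :=
  if τ = [] then 0 else 1 + (Pk (0 :: τ) ∪ Val (0 :: τ)).card

/-- A permutation: a sequence of distinct positive integers. -/
def IsPerm (π : List ℕ) : Prop := π.Nodup ∧ ∀ x ∈ π, 0 < x

/-- The list of all shuffles (interleavings) of two words. -/
def shuffles : List ℕ → List ℕ → List (List ℕ)
  | [], σ => [σ]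
  | π, [] => [π]
  | a :: π, b :: σ =>
      ((shuffles π (b :: σ)).map (a :: ·)) ++ ((shuffles (a :: π) σ).map (b :: ·))
  termination_by π σ => π.length + σ.length

/-- A permutation statistic `St` is shuffle compatible if the multiset
distribution of `St` over the shuffles of `π` and `σ` depends only on
`St π`, `St σ` and the lengths. -/
def ShuffleCompatible {α : Type} (St : List ℕ → α) : Prop :=
  ∀ π π' σ σ' : List ℕ, IsPerm π → IsPerm π' → IsPerm σ → IsPerm σ' →
    π.length = π'.length → σ.length = σ'.length →
    π.Disjoint σ → π'.Disjoint σ' →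
    St π = St π' → St σ = St σ' →
    (((shuffles π σ).map St : List α) : Multiset α) = ((shuffles π' σ').map St : List α)

/-- A descent statistic: a statistic depending only on the descent set and length. -/
def IsDescentStat {α : Type} (St : List ℕ → α) : Prop :=
  ∀ π π' : List ℕ, IsPerm π → IsPerm π' → π.length = π'.length →
    Des π = Des π' → St π = St π'

/-- Standardization: replace each entry by its rank. -/
def std (π : List ℕ) : List ℕ := π.map (fun x => (π.filter (· ≤ x)).length)

/-- The Gaussian (q-)binomial coefficient, via the q-Pascal recursion
`[n+1, k+1]_q = [n, k]_q + q^(k+1) [n, k+1]_q`. -/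
noncomputable def qBinom : ℕ → ℕ → Polynomial ℤ
  | _, 0 => 1
  | 0, _ + 1 => 0
  | n + 1, k + 1 => qBinom n k + Polynomial.X ^ (k + 1) * qBinom n (k + 1)

/-! Append to every word a letter `c` distinct from all others and study
`Σ_{τ ∈ π ⧢ σ} q^maj(τc)`. Every shuffle of `πa` and `σb` ends in `a` or in `b`;
removing that letter leaves a shuffle of `π` and `σb` (resp. `πa` and `σ`) now followed
by `a` (resp. `b`), so induction applies, and the last position `|τ|` is a descent of `τc`
exactly when `c` is smaller than the last letter. Depending on the relative order of
`a`, `b`, `c`, the two resulting terms recombine by one of the two q-Pascal recurrences.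
Taking `c` larger than every letter gives the theorem. -/

open Polynomial

namespace qBinom

@[simp] lemma zero_right (n : ℕ) : qBinom n 0 = 1 := by cases n <;> rfl

lemma succ_succ (n k : ℕ) :
    qBinom (n + 1) (k + 1) = qBinom n k + X ^ (k + 1) * qBinom n (k + 1) := rfl

lemma eq_zero_of_lt {n k : ℕ} (h : n < k) : qBinom n k = 0 := by
  induction n generalizing k with
  | zero => obtain ⟨k, rfl⟩ := Nat.exists_eq_add_one_of_ne_zero (by omega : k ≠ 0); rfl
  | succ n ih =>
    obtain ⟨k, rfl⟩ := Nat.exists_eq_add_one_of_ne_zero (by omega : k ≠ 0)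
    rw [succ_succ, ih (by omega), ih (by omega), mul_zero, add_zero]

@[simp] lemma self (n : ℕ) : qBinom n n = 1 := by
  induction n with
  | zero => rfl
  | succ n ih => rw [succ_succ, ih, eq_zero_of_lt n.lt_succ_self, mul_zero, add_zero]

lemma succ_succ' (k j : ℕ) :
    qBinom (k + j + 1) (k + 1) = X ^ j * qBinom (k + j) k + qBinom (k + j) (k + 1) := by
  induction j generalizing k with
  | zero => simp [eq_zero_of_lt (Nat.lt_succ_self k)]
  | succ j ihj =>
    induction k with
    | zero =>
      have h₁ := succ_succ (j + 1) 0
      have h₂ := succ_succ j 0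
      have h₃ := ihj 0
      simp only [zero_add, zero_right] at h₁ h₂ h₃ ⊢
      linear_combination h₁ - h₂ + X * h₃
    | succ k ihk =>
      have h := ihj (k + 1)
      rw [show k + 1 + j = k + (j + 1) by ring] at h
      rw [show k + 1 + (j + 1) = k + (j + 1) + 1 by ring]
      linear_combination succ_succ (k + (j + 1) + 1) (k + 1) + ihk + X ^ (k + 2) * h
        - X ^ (j + 1) * succ_succ (k + (j + 1)) k - succ_succ (k + (j + 1)) (k + 1)

end qBinom

@[simp] lemma maj_singleton (c : ℕ) : maj [c] = 0 := rfl

lemma maj_append_singleton_append_singleton (w : List ℕ) (b c : ℕ) :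
    maj (w ++ [b] ++ [c]) = maj (w ++ [b]) + if c < b then w.length + 1 else 0 := by
  have hlen : (w ++ [b]).length = w.length + 1 := by simp
  have hget : ∀ i < w.length + 1, (w ++ [b] ++ [c]).getD i 0 = (w ++ [b]).getD i 0 :=
    fun i hi => List.getD_append _ _ _ _ (by omega)
  unfold maj Des
  rw [List.length_append, hlen, List.length_singleton, Finset.sum_filter, Finset.sum_filter,
    Finset.sum_Ico_succ_top (by omega : 1 ≤ w.length + 1)]
  congr 1
  · refine Finset.sum_congr rfl fun i hi => ?_
    rw [Finset.mem_Ico] at hi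
    rw [hget i (by omega), hget (i - 1) (by omega)]
  · simp [List.getD_eq_getElem?_getD]

lemma maj_append_singleton_of_forall_lt {w : List ℕ} {c : ℕ} (h : ∀ x ∈ w, x < c) :
    maj (w ++ [c]) = maj w := by
  induction w using List.reverseRecOn with
  | nil => rfl
  | append_singleton v b _ =>
    rw [maj_append_singleton_append_singleton, if_neg (h b (by simp)).not_gt, add_zero]

@[simp] lemma shuffles_nil_left (σ : List ℕ) : shuffles [] σ = [σ] := by simp [shuffles]

@[simp] lemma shuffles_nil_right (π : List ℕ) : shuffles π [] = [π] := by
  cases π <;> simp [shuffles]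

lemma shuffles_cons_cons (a b : ℕ) (π σ : List ℕ) :
    shuffles (a :: π) (b :: σ) =
      (shuffles π (b :: σ)).map (a :: ·) ++ (shuffles (a :: π) σ).map (b :: ·) := by
  simp [shuffles]

lemma perm_append_of_mem_shuffles {π σ τ : List ℕ} (h : τ ∈ shuffles π σ) :
    τ.Perm (π ++ σ) := by
  induction π generalizing σ τ with
  | nil => simp_all
  | cons a π ihπ =>
    induction σ generalizing τ with
    | nil => simp_all
    | cons b σ ihσ =>
      simp only [shuffles_cons_cons, List.mem_append, List.mem_map] at h
      rcases h with ⟨ρ, hρ, rfl⟩ | ⟨ρ, hρ, rfl⟩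
      · exact (ihπ hρ).cons a
      · exact ((ihσ hρ).cons b).trans List.perm_middle.symm

lemma length_of_mem_shuffles {π σ τ : List ℕ} (h : τ ∈ shuffles π σ) :
    τ.length = π.length + σ.length := by
  rw [(perm_append_of_mem_shuffles h).length_eq, List.length_append]

lemma shuffles_append_singleton_append_singleton (π σ : List ℕ) (a b : ℕ) :
    (shuffles (π ++ [a]) (σ ++ [b]) : Multiset (List ℕ)) =
      ((shuffles π (σ ++ [b])).map (· ++ [a]) : Multiset (List ℕ)) +
        ((shuffles (π ++ [a]) σ).map (· ++ [b]) : Multiset (List ℕ)) := by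
  induction π generalizing σ with
  | nil =>
    induction σ with
    | nil =>
      simp only [List.nil_append, shuffles_cons_cons, shuffles_nil_left, shuffles_nil_right,
        ← Multiset.coe_add, ← Multiset.map_coe, Multiset.coe_singleton, Multiset.map_singleton]
      exact add_comm _ _
    | cons y σ ihσ =>
      simp only [List.nil_append, List.cons_append, shuffles_cons_cons, shuffles_nil_left,
        List.map_append, ← Multiset.coe_add, ← Multiset.map_coe] at ihσ ⊢
      rw [ihσ]
      simp only [Multiset.map_map, Function.comp_def, List.cons_append, Multiset.map_add,
        Multiset.coe_singleton, Multiset.map_singleton]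
      abel
  | cons x π ihπ =>
    induction σ with
    | nil =>
      have h := ihπ []
      simp only [List.nil_append, List.cons_append, shuffles_cons_cons, shuffles_nil_right,
        List.map_append, ← Multiset.coe_add, ← Multiset.map_coe] at h ⊢
      rw [h]
      simp only [Multiset.map_map, Function.comp_def, List.cons_append, Multiset.map_add,
        Multiset.coe_singleton, Multiset.map_singleton]
      abel
    | cons y σ ihσ =>
      have h := ihπ (y :: σ)
      simp only [List.cons_append, shuffles_cons_cons, List.map_append, ← Multiset.coe_add,
        ← Multiset.map_coe] at h ihσ ⊢
      rw [h, ihσ]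
      simp only [Multiset.map_map, Function.comp_def, List.cons_append, Multiset.map_add]
      abel

lemma sum_shuffles_X_pow_maj_append_append (π σ : List ℕ) (a c : ℕ) :
    ((shuffles π σ).map fun ρ => (X : ℤ[X]) ^ maj (ρ ++ [a] ++ [c])).sum =
      X ^ (if c < a then π.length + σ.length + 1 else 0) *
        ((shuffles π σ).map fun ρ => (X : ℤ[X]) ^ maj (ρ ++ [a])).sum := by
  rw [← List.sum_map_mul_left]
  refine congrArg List.sum (List.map_congr_left fun ρ hρ => ?_)
  rw [maj_append_singleton_append_singleton, length_of_mem_shuffles hρ, pow_add, mul_comm]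

lemma sum_shuffles_append_singleton_append_singleton {M : Type*} [AddCommMonoid M]
    (f : List ℕ → M) (π σ : List ℕ) (a b : ℕ) :
    ((shuffles (π ++ [a]) (σ ++ [b])).map f).sum =
      ((shuffles π (σ ++ [b])).map fun ρ => f (ρ ++ [a])).sum +
        ((shuffles (π ++ [a]) σ).map fun ρ => f (ρ ++ [b])).sum := by
  have := congrArg (fun s => (s.map f).sum) (shuffles_append_singleton_append_singleton π σ a b)
  simpa [Multiset.map_map, Function.comp_def] using this

theorem sum_shuffles_X_pow_maj_append_singleton (π σ : List ℕ) (c : ℕ)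
    (h : (π ++ σ ++ [c]).Nodup) :
    ((shuffles π σ).map fun τ => (X : ℤ[X]) ^ maj (τ ++ [c])).sum =
      X ^ (maj (π ++ [c]) + maj (σ ++ [c])) * qBinom (π.length + σ.length) π.length := by
  induction π using List.reverseRecOn generalizing σ c with
  | nil => simp
  | append_singleton π a ihπ =>
    induction σ using List.reverseRecOn generalizing c with
    | nil => simp
    | append_singleton σ b ihσ =>
      obtain ⟨h₁, h₂, hab, hca, hcb⟩ : (π ++ (σ ++ [b]) ++ [a]).Nodup ∧
          (π ++ [a] ++ σ ++ [b]).Nodup ∧ a ≠ b ∧ c ≠ a ∧ c ≠ b := by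
        simp only [List.nodup_append, List.nodup_cons, List.mem_append, List.mem_singleton] at h ⊢
        grind only
      rw [sum_shuffles_append_singleton_append_singleton, sum_shuffles_X_pow_maj_append_append,
        sum_shuffles_X_pow_maj_append_append, ihπ (σ ++ [b]) a h₁, ihσ b h₂]
      simp only [maj_append_singleton_append_singleton, List.length_append, List.length_singleton]
      generalize maj (π ++ [a]) = P, maj (σ ++ [b]) = S, π.length = m, σ.length = n
      rw [show m + 1 + n = m + (n + 1) by ring, show m + 1 + (n + 1) = m + (n + 1) + 1 by ring]
      have pascal := qBinom.succ_succ (m + (n + 1)) m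
      have pascal' := qBinom.succ_succ' m (n + 1)
      split_ifs <;> first | omega | (rw [pascal]; ring1) | (rw [pascal']; ring1)

/-- The distribution of the major index over a shuffle set:
`Σ_{τ ∈ π ⧢ σ} q^(maj τ) = q^(maj π + maj σ) [m+n choose m]_q`. -/
theorem stmt16 (π σ : List ℕ) (hπ : IsPerm π) (hσ : IsPerm σ) (hd : π.Disjoint σ) :
    ((shuffles π σ).map (fun τ => (Polynomial.X : Polynomial ℤ) ^ maj τ)).sum
      = Polynomial.X ^ (maj π + maj σ) * qBinom (π.length + σ.length) π.length := by
  obtain ⟨c, hc⟩ : ∃ c, ∀ x ∈ π ++ σ, x < c :=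
    ⟨(π ++ σ).sum + 1, fun x hx => Nat.lt_succ_of_le (List.le_sum_of_mem hx)⟩
  have hnodup : (π ++ σ ++ [c]).Nodup :=
    (hπ.1.append hσ.1 hd).append (List.nodup_singleton c)
      (List.disjoint_singleton.2 fun hmem => (hc c hmem).false)
  have key := sum_shuffles_X_pow_maj_append_singleton π σ c hnodup
  rwa [maj_append_singleton_of_forall_lt fun x hx => hc x (List.mem_append_left σ hx),
    maj_append_singleton_of_forall_lt fun x hx => hc x (List.mem_append_right π hx),
    List.map_congr_left fun τ hτ => by
      rw [maj_append_singleton_of_forall_lt fun x hx =>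
        hc x ((perm_append_of_mem_shuffles hτ).subset hx)]] at key
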